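/- arXiv:math-ph/9806006 — 3 statements merged into one kernel-verified Lean document; each statement's English description precedes it below -/
import Mathlib

section
/- Let μ > 0 and n = 3/2 + μ. There exists a constant C > 0 such that for every measurable nonnegative function f : ℝ³ × ℝ³ → ℝ, defining ρ_f(x) = ∫ f(x,v) dv, one has ∫ ρ_f(x)^{1+1/n} dx ≤ C ( ∫∫ f(x,v)^{1+1/μ} dv dx + ∫∫ |v|² f(x,v) dv dx ). -/
/-!
Split the velocity integral `ρ = ∫ f dv` at a radius `R`. By Hölder, the part over the ball
`B_R` is at most `(∫ f^p)^{1/p} |B_R|^{1/p'}` with `p = 1 + 1/μ`, and the part outside is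
at most `R⁻² ∫ |v|² f`. For `R = ρ^{1/(2n)}` whichever part dominates already gives
`ρ^{1+1/n} ≲ ∫ f^p` or `ρ^{1+1/n} ≲ ∫ |v|² f`, because `n = 3/2 + μ`
(in dimension `d`, `n = d/2 + μ`). Integrating in `x` and applying Tonelli finishes the proof.
-/

open MeasureTheory Real ENNReal
noncomputable section

abbrev Space := EuclideanSpace ℝ (Fin 3)

theorem rpow_lintegral_le_lintegral_rpow_mul_measure_univ {α : Type*} [MeasurableSpace α]
    (ν : Measure α) {g : α → ℝ≥0∞} (hg : AEMeasurable g ν) {p : ℝ} (hp : 1 < p) :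
    (∫⁻ x, g x ∂ν) ^ p ≤ (∫⁻ x, g x ^ p ∂ν) * ν Set.univ ^ (p - 1) := by
  have hpq : p.HolderConjugate p.conjExponent := .conjExponent hp
  have holder := ENNReal.lintegral_mul_le_Lp_mul_Lq ν hpq hg (aemeasurable_const (b := 1))
  simp only [Pi.mul_apply, mul_one, ENNReal.one_rpow, lintegral_const, one_mul] at holder
  calc (∫⁻ x, g x ∂ν) ^ p
      ≤ ((∫⁻ x, g x ^ p ∂ν) ^ (1 / p) * ν Set.univ ^ (1 / p.conjExponent)) ^ p := by
        gcongr
    _ = (∫⁻ x, g x ^ p ∂ν) * ν Set.univ ^ (p - 1) := by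
        rw [ENNReal.mul_rpow_of_nonneg _ _ hpq.nonneg, ← ENNReal.rpow_mul, ← ENNReal.rpow_mul,
          one_div_mul_cancel hpq.ne_zero, ENNReal.rpow_one, one_div, ← div_eq_inv_mul,
          (div_eq_iff hpq.symm.ne_zero).mpr hpq.sub_one_mul_conj.symm]

theorem ofReal_sq_mul_setLIntegral_compl_ball_le {E : Type*} [SeminormedAddCommGroup E]
    [MeasurableSpace E] [OpensMeasurableSpace E] (ν : Measure E) (g : E → ℝ≥0∞) {R : ℝ}
    (hR : 0 ≤ R) :
    ENNReal.ofReal (R ^ 2) * ∫⁻ v in (Metric.ball 0 R)ᶜ, g v ∂ν ≤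
      ∫⁻ v, ENNReal.ofReal (‖v‖ ^ 2) * g v ∂ν := by
  rw [← lintegral_const_mul' _ _ ENNReal.ofReal_ne_top]
  refine (setLIntegral_mono' Metric.isOpen_ball.measurableSet.compl fun v hv => ?_).trans
    (setLIntegral_le_lintegral _ _)
  have hRv : R ≤ ‖v‖ := by simpa using hv
  gcongr

theorem rpow_le_of_forall_scale_split {ρ a b : ℝ≥0∞} {p q α β γ : ℝ} (hp : 0 < p) (hq : 0 < q)
    (hγ : 0 < γ) (hqβ : q = 1 + γ * β) (hqα : q = p - γ * α)
    (hsplit : ∀ r : ℝ≥0∞, 0 < r → r ≠ ⊤ →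
      ∃ X Y, ρ ≤ X + Y ∧ X ^ p ≤ a * r ^ α ∧ r ^ β * Y ≤ b) :
    ρ ^ q ≤ 2 ^ p * a + 2 * b := by
  rcases eq_zero_or_pos ρ with rfl | hρ0
  · simp [ENNReal.zero_rpow_of_pos hq]
  by_cases hρt : ρ = ⊤
  · obtain ⟨X, Y, hXY, hX, hY⟩ := hsplit 1 one_pos one_ne_top
    simp only [ENNReal.one_rpow, mul_one, one_mul] at hX hY
    rcases ENNReal.add_eq_top.mp (top_le_iff.mp (hρt ▸ hXY)) with rfl | rfl
    · rw [ENNReal.top_rpow_of_pos hp, top_le_iff] at hX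
      simp [hX, (ENNReal.rpow_pos two_pos ofNat_ne_top).ne']
    · simp [top_le_iff.mp hY]
  have hr0 : 0 < ρ ^ γ := ENNReal.rpow_pos hρ0 hρt
  have hrt : ρ ^ γ ≠ ⊤ := ENNReal.rpow_ne_top_of_nonneg hγ.le hρt
  obtain ⟨X, Y, hXY, hX, hY⟩ := hsplit (ρ ^ γ) hr0 hrt
  rw [← ENNReal.rpow_mul] at hX hY
  rcases le_total Y X with hYX | hXY'
  · have hρX : ρ ≤ 2 * X := by rw [two_mul]; exact hXY.trans (add_le_add_right hYX X)
    refine le_add_right ?_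
    have hc0 : ρ ^ (γ * α) ≠ 0 := (ENNReal.rpow_pos hρ0 hρt).ne'
    have hct : ρ ^ (γ * α) ≠ ⊤ := ENNReal.rpow_ne_top_of_ne_zero hρ0.ne' hρt
    refine (ENNReal.mul_le_mul_iff_left hc0 hct).mp ?_
    calc ρ ^ q * ρ ^ (γ * α) = ρ ^ p := by
          rw [← ENNReal.rpow_add _ _ hρ0.ne' hρt, hqα, sub_add_cancel]
      _ ≤ (2 * X) ^ p := by gcongr
      _ = 2 ^ p * X ^ p := ENNReal.mul_rpow_of_nonneg _ _ hp.le
      _ ≤ 2 ^ p * a * ρ ^ (γ * α) := by rw [mul_assoc]; gcongr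
  · have hρY : ρ ≤ 2 * Y := by rw [two_mul]; exact hXY.trans (add_le_add_left hXY' Y)
    refine le_add_left ?_
    calc ρ ^ q = ρ ^ (γ * β) * ρ := by
          rw [hqβ, add_comm, ENNReal.rpow_add _ _ hρ0.ne' hρt, ENNReal.rpow_one]
      _ ≤ ρ ^ (γ * β) * (2 * Y) := by gcongr
      _ = 2 * (ρ ^ (γ * β) * Y) := by ring
      _ ≤ 2 * b := by gcongr

theorem rpow_lintegral_le_lintegral_rpow_add_moment {E : Type*} [NormedAddCommGroup E]
    [NormedSpace ℝ E] [FiniteDimensional ℝ E] [MeasurableSpace E] [BorelSpace E]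
    (ν : Measure E) [ν.IsAddHaarMeasure] {μ n : ℝ} (hμ : 0 < μ)
    (hn : n = Module.finrank ℝ E / 2 + μ) {g : E → ℝ≥0∞} (hg : Measurable g) :
    (∫⁻ v, g v ∂ν) ^ (1 + 1 / n) ≤
      (2 ^ (1 + 1 / μ) * ν (Metric.ball 0 1) ^ (1 / μ) + 2) *
        ((∫⁻ v, g v ^ (1 + 1 / μ) ∂ν) + ∫⁻ v, ENNReal.ofReal (‖v‖ ^ 2) * g v ∂ν) := by
  set d : ℝ := (Module.finrank ℝ E : ℝ)
  set V := ν (Metric.ball 0 1)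
  set A := ∫⁻ v, g v ^ (1 + 1 / μ) ∂ν
  set B := ∫⁻ v, ENNReal.ofReal (‖v‖ ^ 2) * g v ∂ν
  have hd : 0 ≤ d := Nat.cast_nonneg _
  have hn0 : 0 < n := by rw [hn]; positivity
  have hsplit : ∀ r : ℝ≥0∞, 0 < r → r ≠ ⊤ → ∃ X Y, ∫⁻ v, g v ∂ν ≤ X + Y ∧
      X ^ (1 + 1 / μ) ≤ V ^ (1 / μ) * A * r ^ (d / μ) ∧ r ^ (2 : ℝ) * Y ≤ B := by
    intro r hr0 hrt
    set R := r.toReal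
    have hR : 0 < R := ENNReal.toReal_pos hr0.ne' hrt
    refine ⟨∫⁻ v in Metric.ball 0 R, g v ∂ν, ∫⁻ v in (Metric.ball 0 R)ᶜ, g v ∂ν,
      (lintegral_add_compl g measurableSet_ball).ge, ?_, ?_⟩
    · have hball : ν (Metric.ball 0 R) = r ^ d * V := by
        rw [Measure.addHaar_ball_of_pos ν 0 hR, ENNReal.ofReal_pow hR.le,
          ENNReal.ofReal_toReal hrt, ← ENNReal.rpow_natCast]
      calc (∫⁻ v in Metric.ball 0 R, g v ∂ν) ^ (1 + 1 / μ)
          ≤ (∫⁻ v in Metric.ball 0 R, g v ^ (1 + 1 / μ) ∂ν) * ν (Metric.ball 0 R) ^ (1 / μ) := by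
            simpa using rpow_lintegral_le_lintegral_rpow_mul_measure_univ (ν.restrict _)
              hg.aemeasurable (lt_add_of_pos_right _ (by positivity))
        _ ≤ A * (r ^ d * V) ^ (1 / μ) := by
            rw [hball]; gcongr; exact setLIntegral_le_lintegral _ _
        _ = V ^ (1 / μ) * A * r ^ (d / μ) := by
            rw [ENNReal.mul_rpow_of_nonneg _ _ (by positivity), ← ENNReal.rpow_mul,
              div_eq_mul_one_div d]
            ring
    · have := ofReal_sq_mul_setLIntegral_compl_ball_le ν g hR.le
      rwa [ENNReal.ofReal_pow hR.le, ENNReal.ofReal_toReal hrt, ← ENNReal.rpow_two] at this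
  have key := rpow_le_of_forall_scale_split (p := 1 + 1 / μ) (q := 1 + 1 / n) (γ := 1 / (2 * n))
    (by positivity) (by positivity) (by positivity) (by field_simp) (by rw [hn]; field_simp; ring)
    hsplit
  calc (∫⁻ v, g v ∂ν) ^ (1 + 1 / n)
      ≤ 2 ^ (1 + 1 / μ) * (V ^ (1 / μ) * A) + 2 * B := key
    _ ≤ (2 ^ (1 + 1 / μ) * V ^ (1 / μ) + 2) * A + (2 ^ (1 + 1 / μ) * V ^ (1 / μ) + 2) * B := by
        rw [← mul_assoc]; gcongr <;> simp
    _ = _ := (mul_add _ _ _).symm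

/-- interpolation bound for the spatial density:
for `μ > 0` and `n = 3/2 + μ` there is `C > 0` such that for every measurable
`f : ℝ³ × ℝ³ → [0,∞]`, with `ρ_f x = ∫ f (x,v) dv`,
`∫ ρ_f ^ (1+1/n) ≤ C (∫∫ f^(1+1/μ) + ∫∫ |v|² f)`. -/
theorem density_interpolation_bound (μ n : ℝ) (hμ : 0 < μ) (hn : n = 3/2 + μ) :
    ∃ C : ℝ, 0 < C ∧
      ∀ f : Space × Space → ℝ≥0∞, Measurable f →
        ∫⁻ x : Space, (∫⁻ v : Space, f (x, v)) ^ (1 + 1/n) ≤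
          ENNReal.ofReal C *
            ((∫⁻ p : Space × Space, f p ^ (1 + 1/μ)) +
              ∫⁻ p : Space × Space, ENNReal.ofReal (‖p.2‖ ^ 2) * f p) := by
  set K : ℝ≥0∞ := 2 ^ (1 + 1 / μ) * volume (Metric.ball (0 : Space) 1) ^ (1 / μ) + 2
  have hK0 : K ≠ 0 := by simp [K]
  have hKt : K ≠ ⊤ := by
    simp only [K, ne_eq, add_eq_top, ofNat_ne_top, or_false]
    exact mul_ne_top (rpow_ne_top_of_nonneg (by positivity) ofNat_ne_top)
      (rpow_ne_top_of_nonneg (by positivity) measure_ball_lt_top.ne)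
  have hn' : n = (Module.finrank ℝ Space : ℝ) / 2 + μ := by simp [hn]
  refine ⟨K.toReal, ENNReal.toReal_pos hK0 hKt, fun f hf => ?_⟩
  have hf_pow : Measurable fun z => f z ^ (1 + 1 / μ) := hf.pow_const _
  have hf_moment : Measurable fun z : Space × Space => ENNReal.ofReal (‖z.2‖ ^ 2) * f z := by
    fun_prop
  rw [ENNReal.ofReal_toReal hKt, Measure.volume_eq_prod, lintegral_prod _ hf_pow.aemeasurable,
    lintegral_prod _ hf_moment.aemeasurable, ← lintegral_add_left hf_pow.lintegral_prod_right',
    ← lintegral_const_mul' _ _ hKt]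
  exact lintegral_mono fun x =>
    rpow_lintegral_le_lintegral_rpow_add_moment volume hμ hn' (hf.comp measurable_prodMk_left)
end
end

section
/- Let Q satisfy (Q2), (Q3) and define R₀ = -M²/(C_α D_M) > 0. If (f_n) ⊂ F_M is a minimizing sequence for D (i.e. D(f_n) → D_M), then for every R > R₀, lim_{n→∞} ∫_{|x|≥R}∫ f_n dv dx = 0. -/
open MeasureTheory Real Filter Topology
noncomputable section

abbrev Phase := Space × Space

/-- spatial mass density induced by a phase-space density `f`. -/
def rhoF (f : Phase → ℝ) (x : Space) : ℝ := ∫ v : Space, f (x, v)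

/-- Newtonian potential `U_f = -(1/|·|) * ρ_f` induced by `f`. -/
def Upot (f : Phase → ℝ) (x : Space) : ℝ := -∫ y : Space, rhoF f y / ‖x - y‖

/-- field energy `∫ |∇U_f|² dx`. -/
def fieldEnergy (f : Phase → ℝ) : ℝ := ∫ x : Space, ‖gradient (Upot f) x‖ ^ 2

/-- modulus of angular momentum squared `L = |x × v|² = |x|²|v|² - (x·v)²`. -/
def Lang (x v : Space) : ℝ := ‖x‖ ^ 2 * ‖v‖ ^ 2 - (inner ℝ x v : ℝ) ^ 2

/-- Casimir functional `∫∫ Q(f,L) dv dx`. -/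
def Casimir (Q : ℝ → ℝ → ℝ) (f : Phase → ℝ) : ℝ :=
  ∫ p : Phase, Q (f p) (Lang p.1 p.2)

/-- kinetic energy `(1/2)∫∫ |v|² f dv dx`. -/
def kinetic (f : Phase → ℝ) : ℝ := (1/2) * ∫ p : Phase, ‖p.2‖ ^ 2 * f p

/-- `J(f) = ∫∫ Q(f,L) + (1/2)∫∫ |v|² f`. -/
def Jfun (Q : ℝ → ℝ → ℝ) (f : Phase → ℝ) : ℝ := Casimir Q f + kinetic f

/-- energy-Casimir functional `D(f) = J(f) - (1/8π)∫|∇U_f|²`. -/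
def Dfun (Q : ℝ → ℝ → ℝ) (f : Phase → ℝ) : ℝ :=
  Jfun Q f - (1 / (8 * π)) * fieldEnergy f

/-- spherical symmetry: `f(Ax, Av) = f(x,v)` for all `A ∈ SO(3)`. -/
def SphSymm (f : Phase → ℝ) : Prop :=
  ∀ A : Space ≃ₗᵢ[ℝ] Space, LinearMap.det A.toLinearEquiv.toLinearMap = 1 →
    ∀ x v : Space, f (A x, A v) = f (x, v)

/-- the constraint set `F_M`: nonnegative, spherically symmetric `f ∈ L¹(ℝ⁶)`
with total mass `M` and `J(f) < ∞` (i.e. both terms of `J` are integrable). -/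
def memFM (Q : ℝ → ℝ → ℝ) (M : ℝ) (f : Phase → ℝ) : Prop :=
  Integrable f ∧ (∀ p, 0 ≤ f p) ∧ (∫ p : Phase, f p) = M ∧
  Integrable (fun p : Phase => Q (f p) (Lang p.1 p.2)) ∧
  Integrable (fun p : Phase => ‖p.2‖ ^ 2 * f p) ∧ SphSymm f

/-- `D_M = inf { D(f) : f ∈ F_M }`. -/
def DM (Q : ℝ → ℝ → ℝ) (M : ℝ) : ℝ := sInf (Dfun Q '' {f | memFM Q M f})

/-- assumption (Q1). -/
def AQ1 (Q : ℝ → ℝ → ℝ) (C₁ F₀ μ₁ : ℝ) : Prop :=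
  ∀ f L : ℝ, F₀ ≤ f → 0 ≤ L → C₁ * f ^ (1 + 1/μ₁) ≤ Q f L

/-- assumption (Q2). -/
def AQ2 (Q : ℝ → ℝ → ℝ) (C₂ F₀ μ₂ : ℝ) : Prop :=
  ∀ f L : ℝ, 0 ≤ f → f ≤ F₀ → 0 ≤ L → Q f L ≤ C₂ * f ^ (1 + 1/μ₂)

/-- assumption (Q3), first part. -/
def AQ3 (Q : ℝ → ℝ → ℝ) (μ₃ : ℝ) : Prop :=
  ∀ f L lam : ℝ, 0 ≤ f → 0 ≤ L → 0 ≤ lam → lam ≤ 1 →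
    lam ^ (1 + 1/μ₃) * Q f L ≤ Q (lam * f) L

/-- assumption (Q3), second part: `Q(f, ·)` decreasing. -/
def AQ3dec (Q : ℝ → ℝ → ℝ) : Prop :=
  ∀ f L₁ L₂ : ℝ, 0 ≤ f → 0 ≤ L₁ → L₁ ≤ L₂ → Q f L₂ ≤ Q f L₁

/-- assumption (Q4): strict convexity in `f` and `∂_f Q(0,L) = 0`. -/
def AQ4 (Q : ℝ → ℝ → ℝ) : Prop :=
  (∀ L : ℝ, 0 ≤ L → StrictConvexOn ℝ (Set.Ici 0) fun y => Q y L) ∧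
  (∀ L : ℝ, 0 ≤ L → deriv (fun y => Q y L) 0 = 0)

/-- mass of `f` inside the ball of radius `R`. -/
def massIn (f : Phase → ℝ) (R : ℝ) : ℝ :=
  ∫ p in {p : Phase | ‖p.1‖ ≤ R}, f p
/-! The splitting estimate, with its coefficient evaluated at `R`, bounds `m(r) (M - m(r))` for
every `r ≥ R` by a fixed multiple of `D(f_n) - D_M`, which tends to `0`. The function
`r ↦ m_{f_n}(r)` is continuous and tends to `M`, so if `m_{f_n}(R)` stayed below `M - ε` it would,
by the intermediate value theorem, pass through `[ε, M - ε]`, where `m (M - m) ≥ ε (M - ε)`. -/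

section SublevelIntegral

variable {X E : Type*} [MeasurableSpace X] {μ : Measure X} [NormedAddCommGroup E] [NormedSpace ℝ E]
  {φ : X → ℝ} {f : X → E}

theorem setIntegral_sublevel_eq_integral_indicator (hφ : Measurable φ) (r : ℝ) :
    ∫ x in {x | φ x ≤ r}, f x ∂μ = ∫ x, (Set.Ici (φ x)).indicator (fun _ => f x) r ∂μ := by
  rw [← integral_indicator (measurableSet_le hφ measurable_const)]
  rfl

theorem continuous_setIntegral_sublevel (hφ : Measurable φ) (hnull : ∀ r, μ {x | φ x = r} = 0)
    (hf : Integrable f μ) : Continuous fun r => ∫ x in {x | φ x ≤ r}, f x ∂μ := by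
  simp_rw [setIntegral_sublevel_eq_integral_indicator hφ]
  refine continuous_iff_continuousAt.2 fun r => continuousAt_of_dominated (bound := (‖f ·‖))
    (Eventually.of_forall fun r' => ?_) (Eventually.of_forall fun r' => ?_) hf.norm ?_
  · exact hf.aestronglyMeasurable.indicator (measurableSet_le hφ measurable_const)
  · exact Eventually.of_forall fun x => norm_indicator_le_norm_self (fun _ => f x) r'
  · filter_upwards [measure_eq_zero_iff_ae_notMem.1 (hnull r)] with x hx
    exact continuousOn_const.continuousAt_indicator (by simpa [frontier_Ici, eq_comm] using hx)

theorem tendsto_setIntegral_sublevel_atTop (hφ : Measurable φ) (hf : Integrable f μ) :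
    Tendsto (fun r => ∫ x in {x | φ x ≤ r}, f x ∂μ) atTop (𝓝 (∫ x, f x ∂μ)) := by
  simp_rw [setIntegral_sublevel_eq_integral_indicator hφ]
  refine tendsto_integral_filter_of_dominated_convergence (‖f ·‖)
    (Eventually.of_forall fun r => ?_) (Eventually.of_forall fun r => ?_) hf.norm ?_
  · exact hf.aestronglyMeasurable.indicator (measurableSet_le hφ measurable_const)
  · exact Eventually.of_forall fun x => norm_indicator_le_norm_self (fun _ => f x) r
  · refine Eventually.of_forall fun x => tendsto_const_nhds.congr' ?_
    filter_upwards [eventually_ge_atTop (φ x)] with r hr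
    exact (Set.indicator_of_mem (s := Set.Ici (φ x)) hr fun _ => f x).symm

theorem setIntegral_superlevel_eq_sub (hφ : Measurable φ) (hnull : ∀ r, μ {x | φ x = r} = 0)
    (hf : Integrable f μ) (r : ℝ) :
    ∫ x in {x | r ≤ φ x}, f x ∂μ = ∫ x, f x ∂μ - ∫ x in {x | φ x ≤ r}, f x ∂μ := by
  have hlt : {x | φ x < r} =ᵐ[μ] {x | φ x ≤ r} := by
    filter_upwards [measure_eq_zero_iff_ae_notMem.1 (hnull r)] with x hx
    change (φ x < r) = (φ x ≤ r)
    simp [lt_iff_le_and_ne, hx]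
  rw [eq_sub_iff_add_eq', ← setIntegral_congr_set hlt,
    ← integral_add_compl (measurableSet_lt hφ (measurable_const (a := r))) hf]
  simp only [Set.compl_ofPred, not_lt]

end SublevelIntegral

theorem volume_setOf_norm_fst_eq (r : ℝ) : volume {p : Phase | ‖p.1‖ = r} = 0 := by
  have hslab : {p : Phase | ‖p.1‖ = r} = Metric.sphere (0 : Space) r ×ˢ Set.univ := by
    ext p
    simp
  rw [hslab, Measure.volume_eq_prod, Measure.prod_prod, Measure.addHaar_sphere, zero_mul]

section MassIn

variable {f : Phase → ℝ}

theorem continuous_massIn (hf : Integrable f) : Continuous (massIn f) :=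
  continuous_setIntegral_sublevel measurable_fst.norm volume_setOf_norm_fst_eq hf

theorem tendsto_massIn_atTop (hf : Integrable f) :
    Tendsto (massIn f) atTop (𝓝 (∫ p, f p)) :=
  tendsto_setIntegral_sublevel_atTop measurable_fst.norm hf

theorem setIntegral_norm_fst_ge (hf : Integrable f) (R : ℝ) :
    ∫ p in {p : Phase | R ≤ ‖p.1‖}, f p = (∫ p, f p) - massIn f R :=
  setIntegral_superlevel_eq_sub measurable_fst.norm volume_setOf_norm_fst_eq hf R

theorem memFM.massIn_mem_Icc {Q : ℝ → ℝ → ℝ} {M : ℝ} (hf : memFM Q M f) (r : ℝ) :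
    massIn f r ∈ Set.Icc 0 M := by
  obtain ⟨hint, hnonneg, hmass, -⟩ := hf
  refine ⟨setIntegral_nonneg (measurableSet_le measurable_fst.norm measurable_const)
    fun p _ => hnonneg p, hmass ▸ setIntegral_le_integral hint (.of_forall hnonneg)⟩

end MassIn

theorem ContinuousOn.lt_of_eventually_lt_of_forall_notMem_Icc {g : ℝ → ℝ} {R a b : ℝ}
    (hg : ContinuousOn g (Set.Ici R)) (hab : a ≤ b) (hlim : ∀ᶠ r in atTop, b < g r)
    (hgap : ∀ r, R ≤ r → g r ∉ Set.Icc a b) : b < g R := by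
  by_contra! hgR
  have hgRa : g R < a := not_le.1 fun haR => hgap R le_rfl ⟨haR, hgR⟩
  obtain ⟨r₁, hbr₁, hRr₁⟩ := (hlim.and (eventually_ge_atTop R)).exists
  obtain ⟨r, hr, hra⟩ := intermediate_value_Icc hRr₁ (hg.mono Set.Icc_subset_Ici_self)
    ⟨hgRa.le, hab.trans hbr₁.le⟩
  exact hgap r hr.1 ⟨hra.ge, hra ▸ hab⟩

theorem tendsto_apply_of_mul_sub_le {g : ℕ → ℝ → ℝ} {δ : ℕ → ℝ} {M R : ℝ} (hM : 0 < M)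
    (hg : ∀ n, ContinuousOn (g n) (Set.Ici R)) (hlim : ∀ n, Tendsto (g n) atTop (𝓝 M))
    (hle : ∀ n, g n R ≤ M) (hbound : ∀ n r, R ≤ r → g n r * (M - g n r) ≤ δ n)
    (hδ : Tendsto δ atTop (𝓝 0)) : Tendsto (fun n => g n R) atTop (𝓝 M) := by
  refine tendsto_order.2 ⟨fun a ha => ?_, fun b hb => .of_forall fun n => (hle n).trans_lt hb⟩
  set ε := min (M - a) (M / 2)
  have hε : 0 < ε := lt_min (sub_pos.2 ha) (half_pos hM)
  have hεM : ε ≤ M / 2 := min_le_right _ _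
  filter_upwards [hδ.eventually_lt_const (mul_pos hε (by linarith : 0 < M - ε))] with n hn
  -- `m (M - m) - ε (M - ε) = (m - ε) (M - ε - m)`
  have hgap : ∀ r, R ≤ r → g n r ∉ Set.Icc ε (M - ε) := fun r hr ⟨h₁, h₂⟩ => by
    nlinarith [hbound n r hr]
  have := (hg n).lt_of_eventually_lt_of_forall_notMem_Icc (by linarith)
    ((hlim n).eventually_const_lt (by linarith)) hgap
  linarith [min_le_left (M - a) (M / 2)]

theorem mass_concentration_general (Q : ℝ → ℝ → ℝ) (Cα M : ℝ)
    (hM : 0 < M) (hCα : 0 < Cα) (hDMneg : DM Q M < 0)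
    -- the splitting estimate of the previous lemma:
    (hsplit : ∀ f : Phase → ℝ, memFM Q M f → ∀ R : ℝ, 0 < R →
      (-(Cα * DM Q M) / M ^ 2 - 1 / R) * (massIn f R * (M - massIn f R)) ≤
        Dfun Q f - DM Q M)
    (fseq : ℕ → Phase → ℝ) (hmem : ∀ n, memFM Q M (fseq n))
    (hmin : Tendsto (fun n => Dfun Q (fseq n)) atTop (nhds (DM Q M))) :
    ∀ R : ℝ, -(M ^ 2) / (Cα * DM Q M) < R →
      Tendsto (fun n => ∫ p in {p : Phase | R ≤ ‖p.1‖}, fseq n p) atTop (nhds 0) := by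
  intro R hR
  have hCαD : Cα * DM Q M < 0 := mul_neg_of_pos_of_neg hCα hDMneg
  have hRpos : 0 < R := (div_pos_of_neg_of_neg (neg_neg_of_pos (pow_pos hM 2)) hCαD).trans hR
  set c := -(Cα * DM Q M) / M ^ 2 - 1 / R
  have hc : 0 < c := by
    rw [div_lt_iff_of_neg hCαD] at hR
    rw [sub_pos, div_lt_div_iff₀ hRpos (pow_pos hM 2)]
    linarith
  have hbound : ∀ n r, R ≤ r →
      massIn (fseq n) r * (M - massIn (fseq n) r) ≤ (Dfun Q (fseq n) - DM Q M) / c := by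
    intro n r hr
    obtain ⟨hm₀, hmM⟩ := (hmem n).massIn_mem_Icc r
    rw [le_div_iff₀' hc]
    calc c * (massIn (fseq n) r * (M - massIn (fseq n) r))
        ≤ (-(Cα * DM Q M) / M ^ 2 - 1 / r) * (massIn (fseq n) r * (M - massIn (fseq n) r)) :=
          mul_le_mul_of_nonneg_right (sub_le_sub_left (one_div_le_one_div_of_le hRpos hr) _)
            (mul_nonneg hm₀ (sub_nonneg.2 hmM))
      _ ≤ Dfun Q (fseq n) - DM Q M := hsplit _ (hmem n) r (hRpos.trans_le hr)
  have hinner : Tendsto (fun n => massIn (fseq n) R) atTop (𝓝 M) :=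
    tendsto_apply_of_mul_sub_le hM (fun n => (continuous_massIn (hmem n).1).continuousOn)
      (fun n => (hmem n).2.2.1 ▸ tendsto_massIn_atTop (hmem n).1)
      (fun n => ((hmem n).massIn_mem_Icc R).2) hbound
      (by simpa using (hmin.sub_const (DM Q M)).div_const c)
  simp_rw [setIntegral_norm_fst_ge (hmem _).1, (hmem _).2.2.1]
  simpa using hinner.const_sub M

/-- concentration: under (Q2), (Q3), with `R₀ = -M²/(C_α D_M) > 0`,
along any minimizing sequence of `D` in `F_M` the mass outside any ball of
radius `R > R₀` tends to `0`. -/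
theorem mass_concentration (Q : ℝ → ℝ → ℝ) (C₂ F₀ μ₂ μ₃ α Cα M : ℝ)
    (hC₂ : 0 < C₂) (hF₀ : 0 < F₀) (hμ₂ : 0 < μ₂) (hμ₂' : μ₂ < 3/2)
    (hμ₃ : 0 < μ₃) (hμ₃' : μ₃ < 3/2) (hM : 0 < M)
    (hQpos : ∀ f L : ℝ, 0 ≤ f → 0 ≤ L → 0 ≤ Q f L)
    (hQ2 : AQ2 Q C₂ F₀ μ₂) (hQ3 : AQ3 Q μ₃)
    (hα : 0 < α) (hCα : 0 < Cα) (hDMneg : DM Q M < 0)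
    -- the splitting estimate of the previous lemma:
    (hsplit : ∀ f : Phase → ℝ, memFM Q M f → ∀ R : ℝ, 0 < R →
      (-(Cα * DM Q M) / M ^ 2 - 1 / R) * (massIn f R * (M - massIn f R)) ≤
        Dfun Q f - DM Q M)
    (fseq : ℕ → Phase → ℝ) (hmem : ∀ n, memFM Q M (fseq n))
    (hmin : Tendsto (fun n => Dfun Q (fseq n)) atTop (nhds (DM Q M))) :
    ∀ R : ℝ, -(M ^ 2) / (Cα * DM Q M) < R →
      Tendsto (fun n => ∫ p in {p : Phase | R ≤ ‖p.1‖}, fseq n p) atTop (nhds 0) :=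
  mass_concentration_general Q Cα M hM hCα hDMneg hsplit fseq hmem hmin
end
end

section
/- Let Q : [0,∞)×[0,∞) → [0,∞) satisfy (Q3) with parameter μ₃ and (Q5): C₃ ∂²_f Q(f,L) ≤ ∂²_f Q(λf,L) ≤ C₄ ∂²_f Q(f,L) for λ near 1. Then for all f > 0 and L ≥ 0, (2^{1+1/μ₃} - 1) Q(f,L) ≥ ∂_f Q(f,L) f + c ∂²_f Q(f,L) f², for some constant c > 0 depending only on C₃, C₄. -/
open Real

set_option maxHeartbeats 1000000 in
/-- under (Q3) and (Q5), for all `f > 0`, `L ≥ 0`,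
`(2^{1+1/μ₃} - 1) Q(f,L) ≥ ∂_f Q(f,L) f + c ∂²_f Q(f,L) f²` for some `c > 0`
depending only on the constants `C₃, C₄` of (Q5).  Here `Q₁ = ∂_f Q` and
`Q₂ = ∂²_f Q` are the first and second derivatives of `Q` in `f`. -/
theorem taylor_Q_inequality (Q Q₁ Q₂ : ℝ → ℝ → ℝ) (μ₃ C₃ C₄ : ℝ)
    (hμ₃ : 0 < μ₃) (hμ₃' : μ₃ < 3/2) (hC₃ : 0 < C₃) (hC₄ : 0 < C₄)
    (hQpos : ∀ f L : ℝ, 0 ≤ f → 0 ≤ L → 0 ≤ Q f L)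
    (hQ₁ : ∀ f L : ℝ, 0 < f → 0 ≤ L → HasDerivAt (fun y => Q y L) (Q₁ f L) f)
    (hQ₂ : ∀ f L : ℝ, 0 < f → 0 ≤ L → HasDerivAt (fun y => Q₁ y L) (Q₂ f L) f)
    (hQ₂pos : ∀ f L : ℝ, 0 < f → 0 ≤ L → 0 < Q₂ f L)
    -- assumption (Q3):
    (hQ3 : ∀ f L lam : ℝ, 0 ≤ f → 0 ≤ L → 0 ≤ lam → lam ≤ 1 →
      lam ^ (1 + 1/μ₃) * Q f L ≤ Q (lam * f) L)
    -- assumption (Q5): comparability of second derivatives for `λ` near `1`: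
    (hQ5 : ∃ ε : ℝ, 0 < ε ∧ ∀ lam : ℝ, |lam - 1| ≤ ε → ∀ f L : ℝ, 0 < f → 0 ≤ L →
      C₃ * Q₂ f L ≤ Q₂ (lam * f) L ∧ Q₂ (lam * f) L ≤ C₄ * Q₂ f L) :
    ∃ c : ℝ, 0 < c ∧ ∀ f L : ℝ, 0 < f → 0 ≤ L →
      Q₁ f L * f + c * (Q₂ f L * f ^ 2) ≤ ((2:ℝ) ^ (1 + 1/μ₃) - 1) * Q f L := by
  obtain ⟨ε, hε, hQ5'⟩ := hQ5
  obtain ⟨δ, hδ0, hδε, hδhalf⟩ : ∃ δ : ℝ, 0 < δ ∧ δ ≤ ε ∧ δ ≤ 1/2 :=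
    ⟨min ε (1/2), lt_min hε (by norm_num), min_le_left _ _, min_le_right _ _⟩
  refine ⟨δ * (1 - δ) * C₃, mul_pos (mul_pos hδ0 (by linarith)) hC₃, ?_⟩
  intro f L hf hL
  set p : ℝ := 1 + 1/μ₃ with hp
  have h2p : (0:ℝ) < (2:ℝ) ^ p := Real.rpow_pos_of_pos two_pos p
  -- Step 1 : Q(2f) ≤ 2^p Q(f)
  have hQ3' := hQ3 (2*f) L (1/2) (by linarith) hL (by norm_num) (by norm_num)
  have heq : (1/2 : ℝ) * (2*f) = f := by ring
  rw [heq] at hQ3'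
  have hhalf2 : (2:ℝ) ^ p * (1/2 : ℝ) ^ p = 1 := by
    rw [← Real.mul_rpow (by norm_num) (by norm_num)]
    norm_num
  have hstep1 : Q (2*f) L ≤ (2:ℝ) ^ p * Q f L := by
    have := mul_le_mul_of_nonneg_left hQ3' (le_of_lt h2p)
    calc Q (2*f) L = (2:ℝ) ^ p * (1/2 : ℝ) ^ p * Q (2*f) L := by rw [hhalf2]; ring
    _ = (2:ℝ) ^ p * ((1/2 : ℝ) ^ p * Q (2*f) L) := by ring
    _ ≤ (2:ℝ) ^ p * Q f L := this
  -- continuity helpers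
  have hQc : ∀ a b : ℝ, 0 < a → ContinuousOn (fun y => Q y L) (Set.Icc a b) := by
    intro a b ha x hx
    exact (hQ₁ x L (lt_of_lt_of_le ha hx.1) hL).continuousAt.continuousWithinAt
  have hQ₁c : ∀ a b : ℝ, 0 < a → ContinuousOn (fun y => Q₁ y L) (Set.Icc a b) := by
    intro a b ha x hx
    exact (hQ₂ x L (lt_of_lt_of_le ha hx.1) hL).continuousAt.continuousWithinAt
  -- monotonicity of Q₁ on [f, ∞)
  have hmono : ∀ a b : ℝ, f ≤ a → a < b → Q₁ a L ≤ Q₁ b L := by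
    intro a b ha hab
    have ha0 : 0 < a := lt_of_lt_of_le hf ha
    obtain ⟨η, hη, hηslope⟩ := exists_hasDerivAt_eq_slope (fun y => Q₁ y L)
      (fun y => Q₂ y L) hab (hQ₁c a b ha0)
      (fun x hx => hQ₂ x L (lt_trans ha0 hx.1) hL)
    have hη0 : 0 < η := lt_trans ha0 hη.1
    have := hQ₂pos η L hη0 hL
    have hslope : 0 < (Q₁ b L - Q₁ a L) / (b - a) := by rw [← hηslope]; exact this
    have := (div_pos_iff.mp hslope)
    rcases this with ⟨h1, _⟩ | ⟨_, h2⟩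
    · linarith
    · linarith
  -- key points
  have hab : f < (1+δ)*f := by nlinarith
  have hbd : (1+δ)*f < 2*f := by nlinarith
  -- MVT A : on [f, (1+δ)f]
  obtain ⟨ζ, hζ, hζslope⟩ := exists_hasDerivAt_eq_slope (fun y => Q y L)
    (fun y => Q₁ y L) hab (hQc f _ hf) (fun x hx => hQ₁ x L (lt_trans hf hx.1) hL)
  -- MVT B : on [(1+δ)f, 2f]
  obtain ⟨ξ, hξ, hξslope⟩ := exists_hasDerivAt_eq_slope (fun y => Q y L)
    (fun y => Q₁ y L) hbd (hQc ((1+δ)*f) _ (by nlinarith))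
    (fun x hx => hQ₁ x L (by nlinarith [hx.1]) hL)
  -- MVT C : Q₁ on [f, (1+δ)f]
  obtain ⟨η, hη, hηslope⟩ := exists_hasDerivAt_eq_slope (fun y => Q₁ y L)
    (fun y => Q₂ y L) hab (hQ₁c f _ hf) (fun x hx => hQ₂ x L (lt_trans hf hx.1) hL)
  have hη0 : 0 < η := lt_trans hf hη.1
  -- Q5 at η : Q₂ η L ≥ C₃ Q₂ f L
  have hηlam : (η / f) * f = η := by field_simp
  have hQ5η : C₃ * Q₂ f L ≤ Q₂ η L := by
    have hlam : |η / f - 1| ≤ ε := by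
      rw [abs_le]
      constructor
      · have : 1 ≤ η / f := (le_div_iff₀ hf).mpr (by linarith [hη.1])
        linarith
      · have : η / f ≤ 1 + δ := (div_le_iff₀ hf).mpr (by nlinarith [hη.2])
        linarith
    have := (hQ5' (η / f) hlam f L hf hL).1
    rwa [hηlam] at this
  -- from MVT C : Q₁((1+δ)f) ≥ Q₁ f + δ f C₃ Q₂ f
  have hC : Q₁ ((1+δ)*f) L - Q₁ f L = Q₂ η L * (δ * f) := by
    have hne : (1+δ)*f - f = δ * f := by ring
    rw [eq_div_iff (sub_ne_zero.mpr (ne_of_gt hab))] at hηslope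
    rw [← hηslope, hne]
  -- from MVT A : Q((1+δ)f) - Q f = Q₁ ζ L * (δ f) ≥ Q₁ f L * δ f
  have hA : Q ((1+δ)*f) L - Q f L = Q₁ ζ L * (δ * f) := by
    rw [eq_div_iff (sub_ne_zero.mpr (ne_of_gt hab))] at hζslope
    rw [← hζslope]; ring
  have hAmono : Q₁ f L ≤ Q₁ ζ L := hmono f ζ le_rfl hζ.1
  -- from MVT B : Q(2f) - Q((1+δ)f) = Q₁ ξ L * ((1-δ) f) ≥ (Q₁ f + δ f C₃ Q₂ f)(1-δ)f
  have hB : Q (2*f) L - Q ((1+δ)*f) L = Q₁ ξ L * ((1-δ) * f) := by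
    rw [eq_div_iff (sub_ne_zero.mpr (ne_of_gt hbd))] at hξslope
    rw [← hξslope]; ring
  have hBmono : Q₁ ((1+δ)*f) L ≤ Q₁ ξ L := hmono ((1+δ)*f) ξ (by nlinarith) hξ.1
  -- combine everything
  have hQ2f : 0 < Q₂ f L := hQ₂pos f L hf hL
  have h1δ : (0:ℝ) < 1 - δ := by linarith
  nlinarith [mul_le_mul_of_nonneg_right hBmono (by nlinarith : (0:ℝ) ≤ (1-δ)*f),
    mul_le_mul_of_nonneg_right hAmono (by nlinarith : (0:ℝ) ≤ δ*f),
    mul_le_mul_of_nonneg_right hQ5η (by nlinarith : (0:ℝ) ≤ δ*f*((1-δ)*f))]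
end
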